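/- arXiv:1912.04362 — 2 statements merged into one kernel-verified Lean document; each statement's English description precedes it below -/
import Mathlib

section
/- Let f_h ∈ C_c^∞(ℝⁿ), h ∈ (0,1], be semiclassically band limited in a compact set ℬ ⊂ ℝⁿ, with supp f_h contained in the fixed compact set K for all h. Let φ ∈ C_c^∞(ℝⁿ) with φ = 1 on a neighborhood of K, let χ ∈ C_c^∞(ℝⁿ) with χ = 1 on a neighborhood of ℬ, and set ψ(x,ξ) = φ(x)χ(ξ). Then f_h is localized in phase space with this ψ: for every Schwartz seminorm p (i.e., p(g) = sup_x |x^α ∂^β g(x)| for multi-indices α, β), the quantity p(f_h − ψ(x,hD)f_h) is O(h^∞). -/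
open MeasureTheory Real Complex Filter Set
open scoped RealInnerProductSpace Topology

noncomputable def scFT (n : ℕ) (h : ℝ) (f : EuclideanSpace ℝ (Fin n) → ℂ)
    (ξ : EuclideanSpace ℝ (Fin n)) : ℂ :=
  ∫ x, Complex.exp (-(Complex.I) * (((inner ℝ x ξ : ℝ) / h : ℝ) : ℂ)) * f x

noncomputable def scSobolev (n : ℕ) (h s : ℝ) (f : EuclideanSpace ℝ (Fin n) → ℂ) : ℝ :=
  ((2 * Real.pi * h) ^ (-(n : ℝ)) *
    ∫ ξ : EuclideanSpace ℝ (Fin n), (1 + ‖ξ‖ ^ 2) ^ s * ‖scFT n h f ξ‖ ^ 2) ^ ((1:ℝ)/2)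

noncomputable def quantize (n : ℕ) (h : ℝ)
    (ψ : EuclideanSpace ℝ (Fin n) × EuclideanSpace ℝ (Fin n) → ℂ)
    (f : EuclideanSpace ℝ (Fin n) → ℂ) (x : EuclideanSpace ℝ (Fin n)) : ℂ :=
  (((2 * Real.pi * h) ^ (-(n : ℝ)) : ℝ) : ℂ) *
    ∫ ξ : EuclideanSpace ℝ (Fin n), ∫ y : EuclideanSpace ℝ (Fin n),
      Complex.exp (Complex.I * (((inner ℝ (x - y) ξ : ℝ) / h : ℝ) : ℂ)) * ψ (x, ξ) * f y

noncomputable def l2norm (n : ℕ) (f : EuclideanSpace ℝ (Fin n) → ℂ) : ℝ :=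
  (∫ x, ‖f x‖ ^ 2) ^ ((1:ℝ)/2)

noncomputable def latticePt (n : ℕ) (W : Matrix (Fin n) (Fin n) ℝ) (k : Fin n → ℤ) :
    EuclideanSpace ℝ (Fin n) :=
  (WithLp.equiv 2 (Fin n → ℝ)).symm (W.mulVec (fun i => (k i : ℝ)))

noncomputable def shiftVec (n : ℕ) (W : Matrix (Fin n) (Fin n) ℝ) (k : Fin n → ℤ) :
    EuclideanSpace ℝ (Fin n) :=
  (2 * Real.pi) • (WithLp.equiv 2 (Fin n → ℝ)).symm ((W.transpose)⁻¹.mulVec (fun i => (k i : ℝ)))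

/-- A family `f h ∈ C_c^∞(ℝⁿ)`, `h ∈ (0,1]`, is semiclassically band limited in the
compact set `B ⊆ ℝⁿ`. -/
def SCBandLimited (n : ℕ) (B : Set (EuclideanSpace ℝ (Fin n)))
    (f : ℝ → EuclideanSpace ℝ (Fin n) → ℂ) : Prop :=
  (∀ h ∈ Set.Ioc (0:ℝ) 1, ContDiff ℝ (⊤ : ℕ∞) (f h)) ∧
  (∃ K : Set (EuclideanSpace ℝ (Fin n)), IsCompact K ∧
    ∀ h ∈ Set.Ioc (0:ℝ) 1, tsupport (f h) ⊆ K) ∧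
  (∃ s : ℝ, ∃ N : ℕ, ∃ C : ℝ, ∀ h ∈ Set.Ioc (0:ℝ) 1,
    scSobolev n h s (f h) ≤ C * h ^ (-(N : ℤ))) ∧
  (∀ U : Set (EuclideanSpace ℝ (Fin n)), IsOpen U → B ⊆ U → ∀ N : ℕ, ∃ C : ℝ,
    ∀ h ∈ Set.Ioc (0:ℝ) 1, ∀ ξ ∉ U,
      ‖scFT n h (f h) ξ‖ ≤ C * h ^ N * (1 + ‖ξ‖ ^ 2) ^ (-(N : ℝ) / 2))

open scoped FourierTransform

section Helpers

lemma scFT_eq_fourier (n : ℕ) (h : ℝ) (hh : 0 < h) (g : EuclideanSpace ℝ (Fin n) → ℂ)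
    (ξ : EuclideanSpace ℝ (Fin n)) :
    𝓕 g ξ = scFT n h g ((2 * π * h) • ξ) := by
  rw [Real.fourier_eq']
  unfold scFT
  congr 1
  funext v
  rw [smul_eq_mul, real_inner_smul_right]
  congr 1
  have : (2 * π * h * ⟪v, ξ⟫ / h : ℝ) = 2 * π * ⟪v, ξ⟫ := by field_simp
  rw [this]
  push_cast
  ring

lemma smul_fourierInv (n : ℕ) (u : EuclideanSpace ℝ (Fin n) → ℂ) (hu : Integrable u)
    (x : EuclideanSpace ℝ (Fin n)) :
    Integrable (fun v : EuclideanSpace ℝ (Fin n) => 𝐞 (⟪v, x⟫ : ℝ) • u v) := by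
  refine hu.norm.mono' ?_ ?_
  · exact ((Real.continuous_fourierChar.comp
      (continuous_id.inner continuous_const)).aestronglyMeasurable.smul hu.1)
  · filter_upwards with v
    simp [Circle.norm_smul]

lemma key_identity (n : ℕ) (h : ℝ) (hh : 0 < h)
    (g : EuclideanSpace ℝ (Fin n) → ℂ) (hgcont : Continuous g)
    (hgi : Integrable g) (hFgi : Integrable (𝓕 g))
    (φ χ : EuclideanSpace ℝ (Fin n) → ℂ)
    (hφg : ∀ x, φ x * g x = g x)
    (hVint : Integrable (fun η => χ ((2 * π * h) • η) * 𝓕 g η))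
    (x : EuclideanSpace ℝ (Fin n)) :
    g x - quantize n h (fun p => φ p.1 * χ p.2) g x
      = φ x * 𝓕 (fun η => (1 - χ (-((2 * π * h) • η))) * 𝓕 g (-η)) x := by
  set R : ℝ := 2 * π * h with hRdef
  have hR : 0 < R := by positivity
  have hRn : (R ^ n : ℝ) ≠ 0 := by positivity
  set V' : EuclideanSpace ℝ (Fin n) → ℂ := fun η => χ (R • η) * 𝓕 g η with hV'
  set W : EuclideanSpace ℝ (Fin n) → ℂ := fun η => (1 - χ (R • η)) * 𝓕 g η with hW
  have hWint : Integrable W := by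
    have : W = fun η => 𝓕 g η - V' η := by funext η; simp only [hW, hV']; ring
    rw [this]; exact hFgi.sub hVint
  have step1 : quantize n h (fun p => φ p.1 * χ p.2) g x = φ x * 𝓕⁻ V' x := by
    unfold quantize
    have inner_eq : ∀ ξ : EuclideanSpace ℝ (Fin n),
        (∫ y, Complex.exp (Complex.I * (((inner ℝ (x - y) ξ : ℝ) / h : ℝ) : ℂ)) *
          ((fun p : EuclideanSpace ℝ (Fin n) × EuclideanSpace ℝ (Fin n) => φ p.1 * χ p.2) (x, ξ)) * g y)
        = φ x * (Complex.exp (Complex.I * (((⟪x, ξ⟫ : ℝ) / h : ℝ) : ℂ)) * χ ξ * scFT n h g ξ) := by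
      intro ξ
      simp only []
      have hpt : ∀ y : EuclideanSpace ℝ (Fin n),
          Complex.exp (Complex.I * (((inner ℝ (x - y) ξ : ℝ) / h : ℝ) : ℂ)) * (φ x * χ ξ) * g y
          = (φ x * (Complex.exp (Complex.I * (((⟪x, ξ⟫ : ℝ) / h : ℝ) : ℂ)) * χ ξ)) *
            (Complex.exp (-(Complex.I) * (((inner ℝ y ξ : ℝ) / h : ℝ) : ℂ)) * g y) := by
        intro y
        have hsub : (inner ℝ (x - y) ξ : ℝ) = ⟪x, ξ⟫ - ⟪y, ξ⟫ := inner_sub_left _ _ _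
        have hexp : Complex.exp (Complex.I * (((inner ℝ (x - y) ξ : ℝ) / h : ℝ) : ℂ))
            = Complex.exp (Complex.I * (((⟪x, ξ⟫ : ℝ) / h : ℝ) : ℂ)) *
              Complex.exp (-(Complex.I) * (((inner ℝ y ξ : ℝ) / h : ℝ) : ℂ)) := by
          rw [← Complex.exp_add]
          congr 1
          rw [hsub]
          push_cast
          ring
        rw [hexp]
        ring
      simp_rw [hpt]
      rw [MeasureTheory.integral_const_mul]
      have hsc : scFT n h g ξ
          = ∫ y : EuclideanSpace ℝ (Fin n),
              Complex.exp (-(Complex.I) * (((inner ℝ y ξ : ℝ) / h : ℝ) : ℂ)) * g y := rfl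
      rw [hsc]
      ring
    simp_rw [inner_eq]
    rw [MeasureTheory.integral_const_mul]
    set F : EuclideanSpace ℝ (Fin n) → ℂ :=
      fun ξ => Complex.exp (Complex.I * (((⟪x, ξ⟫ : ℝ) / h : ℝ) : ℂ)) * χ ξ * scFT n h g ξ with hF
    have hFR : ∀ η, F (R • η) = 𝐞 (⟪η, x⟫ : ℝ) • V' η := by
      intro η
      simp only [hF, hV', Circle.smul_def, Real.fourierChar_apply]
      rw [scFT_eq_fourier n h hh g η]
      have h1 : ((⟪x, R • η⟫ : ℝ) / h : ℝ) = 2 * π * ⟪η, x⟫ := by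
        rw [real_inner_smul_right, real_inner_comm]
        field_simp [hRdef]
        ring
      rw [h1]
      have h2 : (Complex.I * ((2 * π * ⟪η, x⟫ : ℝ) : ℂ)) = (((2 * π * ⟪η, x⟫ : ℝ)) : ℂ) * Complex.I := by ring
      rw [h2, smul_eq_mul]
      ring
    have hsub2 : ∫ ξ, F ξ = (R ^ n : ℝ) • ∫ η, F (R • η) := by
      rw [MeasureTheory.Measure.integral_comp_smul_of_nonneg volume F R (hR := hR.le),
        finrank_euclideanSpace_fin, smul_smul, mul_inv_cancel₀ hRn, one_smul]
    rw [hsub2]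
    simp_rw [hFR]
    rw [← Real.fourierInv_eq]
    have hc : (((R : ℝ) ^ (-(n : ℝ)) : ℝ) : ℂ) * ((R ^ n : ℝ) : ℂ) = 1 := by
      rw [← Complex.ofReal_mul,
        show ((R : ℝ) ^ (-(n : ℝ)) : ℝ) = ((R : ℝ) ^ n)⁻¹ by
          rw [Real.rpow_neg hR.le, Real.rpow_natCast],
        inv_mul_cancel₀ hRn, Complex.ofReal_one]
    rw [Complex.real_smul]
    linear_combination (φ x * 𝓕⁻ V' x) * hc
  have step2 : g x = φ x * 𝓕⁻ (𝓕 g) x := by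
    rw [hgi.fourierInv_fourier_eq hFgi hgcont.continuousAt, hφg]
  have step3 : 𝓕⁻ W x = 𝓕⁻ (𝓕 g) x - 𝓕⁻ V' x := by
    simp only [Real.fourierInv_eq]
    rw [← integral_sub (smul_fourierInv n _ hFgi x) (smul_fourierInv n _ hVint x)]
    congr 1
    funext v
    rw [← smul_sub]
    congr 1
    simp only [hW, hV']
    ring
  have step4 : 𝓕⁻ W x = 𝓕 (fun η => (1 - χ (-(R • η))) * 𝓕 g (-η)) x := by
    rw [Real.fourierInv_eq_fourier_comp_neg]
    congr 1
    refine congrArg (fun F : EuclideanSpace ℝ (Fin n) → ℂ => 𝓕 F x) ?_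
    funext η
    simp only [hW, smul_neg]
  rw [step1, step2, ← step4, step3]
  ring

lemma phi_int (n M j : ℕ) (hMj : j + n + 1 ≤ M) :
    Integrable (fun ξ : EuclideanSpace ℝ (Fin n) => ‖ξ‖^j * ((1 + ‖ξ‖^2) ^ (-(M:ℝ)/2))) := by
  have hdim : ((Module.finrank ℝ (EuclideanSpace ℝ (Fin n))) : ℝ) < ((M:ℝ) - (j:ℝ)) := by
    rw [finrank_euclideanSpace_fin]
    have : ((j:ℝ) + n + 1) ≤ (M:ℝ) := by exact_mod_cast hMj
    linarith
  have hmaj : Integrable (fun ξ : EuclideanSpace ℝ (Fin n) =>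
      ((1:ℝ) + ‖ξ‖^2) ^ (-((M:ℝ) - (j:ℝ))/2)) := integrable_rpow_neg_one_add_norm_sq hdim
  refine hmaj.mono' ?_ ?_
  · apply Continuous.aestronglyMeasurable
    exact (continuous_norm.pow j).mul ((continuous_const.add ((continuous_norm.pow 2))).rpow_const
      (fun ξ => Or.inl (by simp only [Pi.add_apply, Pi.pow_apply]; positivity)))
  · filter_upwards with ξ
    have h0 : (0:ℝ) < 1 + ‖ξ‖^2 := by positivity
    rw [Real.norm_eq_abs, _root_.abs_of_nonneg (by positivity)]
    have e1 : (‖ξ‖^2 : ℝ) ^ ((j:ℝ)/2) = ‖ξ‖^j := by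
      rw [← Real.rpow_natCast ‖ξ‖ 2, ← Real.rpow_mul (norm_nonneg ξ),
        show ((2:ℕ):ℝ) * ((j:ℝ)/2) = (j:ℝ) by push_cast; ring, Real.rpow_natCast]
    have h1 : ‖ξ‖^j ≤ (1 + ‖ξ‖^2) ^ ((j:ℝ)/2) := by
      rw [← e1]
      exact Real.rpow_le_rpow (by positivity) (by linarith) (by positivity)
    calc ‖ξ‖^j * ((1 + ‖ξ‖^2) ^ (-(M:ℝ)/2))
        ≤ (1 + ‖ξ‖^2) ^ ((j:ℝ)/2) * ((1 + ‖ξ‖^2) ^ (-(M:ℝ)/2)) := by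
          exact mul_le_mul_of_nonneg_right h1 (by positivity)
      _ = (1 + ‖ξ‖^2) ^ (-((M:ℝ) - (j:ℝ))/2) := by
          rw [← Real.rpow_add h0]
          congr 1
          ring

end Helpers

set_option maxHeartbeats 2000000

/-- a semiclassically band limited family is localized in phase
space with the product symbol `ψ(x,ξ) = φ(x)χ(ξ)`:  every Schwartz seminorm of
`f_h − ψ(x,hD) f_h` is `O(h^∞)`. -/
theorem scbl_localized_in_phase_space
    (n : ℕ) (B : Set (EuclideanSpace ℝ (Fin n))) (hB : IsCompact B)
    (K : Set (EuclideanSpace ℝ (Fin n))) (hK : IsCompact K)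
    (f : ℝ → EuclideanSpace ℝ (Fin n) → ℂ)
    (hf : SCBandLimited n B f)
    (hfK : ∀ h ∈ Set.Ioc (0:ℝ) 1, tsupport (f h) ⊆ K)
    (φ : EuclideanSpace ℝ (Fin n) → ℂ) (hφ : ContDiff ℝ (⊤ : ℕ∞) φ) (hφc : HasCompactSupport φ)
    (hφ1 : ∃ U : Set (EuclideanSpace ℝ (Fin n)), IsOpen U ∧ K ⊆ U ∧ ∀ x ∈ U, φ x = 1)
    (χ : EuclideanSpace ℝ (Fin n) → ℂ) (hχ : ContDiff ℝ (⊤ : ℕ∞) χ) (hχc : HasCompactSupport χ)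
    (hχ1 : ∃ U : Set (EuclideanSpace ℝ (Fin n)), IsOpen U ∧ B ⊆ U ∧ ∀ ξ ∈ U, χ ξ = 1) :
    ∀ k m : ℕ, ∀ N : ℕ, ∃ C : ℝ, ∀ h ∈ Set.Ioc (0:ℝ) 1,
      ∀ x : EuclideanSpace ℝ (Fin n),
        ‖x‖ ^ k * ‖iteratedFDeriv ℝ m
          (fun x => f h x - quantize n h (fun p => φ p.1 * χ p.2) (f h) x) x‖
          ≤ C * h ^ N := by
  intro k m N
  obtain ⟨hf1, -, -, hf4⟩ := hf
  obtain ⟨Uχ, hUχo, hBUχ, hχUχ⟩ := hχ1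
  obtain ⟨Uφ, hUφo, hKUφ, hφUφ⟩ := hφ1
  set M : ℕ := N + n + m + 1 with hM
  obtain ⟨C₀, hC₀⟩ := hf4 Uχ hUχo hBUχ M
  obtain ⟨Aχ, hAχ⟩ := hχ.continuous.bounded_above_of_compact_support hχc
  have hAχ0 : 0 ≤ Aχ := le_trans (norm_nonneg _) (hAχ 0)
  set C₁ : ℝ := (1 + Aχ) * max C₀ 0 with hC₁
  have hC₁0 : 0 ≤ C₁ := by positivity
  set Φ : ℕ → EuclideanSpace ℝ (Fin n) → ℝ :=
    fun j ξ => ‖ξ‖^j * ((1 + ‖ξ‖^2) ^ (-(M:ℝ)/2)) with hΦ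
  have hΦnn : ∀ j ξ, 0 ≤ Φ j ξ := fun j ξ => by simp only [hΦ]; positivity
  have hΦint : ∀ j, j ≤ m → Integrable (Φ j) := fun j hj => phi_int n M j (by omega)
  set Dj : ℕ → ℝ := fun j => ∫ ξ, Φ j ξ with hDj
  have hDj0 : ∀ j, 0 ≤ Dj j := fun j => integral_nonneg (fun ξ => hΦnn j ξ)
  have hBφex : ∀ i : ℕ, ∃ b : ℝ, ∀ y, ‖iteratedFDeriv ℝ i φ y‖ ≤ b := fun i =>
    (hφ.continuous_iteratedFDeriv (by exact_mod_cast le_top)).bounded_above_of_compact_support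
      (hφc.iteratedFDeriv i)
  choose Bφ hBφ using hBφex
  have hBφ0 : ∀ i, 0 ≤ Bφ i := fun i => le_trans (norm_nonneg _) (hBφ i 0)
  obtain ⟨Rb, hRb⟩ := isBounded_iff_forall_norm_le.1 hφc.isBounded
  set Rx : ℝ := max Rb 0 with hRx
  set C : ℝ := Rx^k * ∑ i ∈ Finset.range (m+1),
      (m.choose i : ℝ) * Bφ i * ((2*π)^(m-i) * (C₁ * Dj (m-i) * ((2*π)^((m-i)+n))⁻¹)) with hC
  have hπ : (0:ℝ) < π := Real.pi_pos
  have hC0 : 0 ≤ C := by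
    refine mul_nonneg (by positivity) (Finset.sum_nonneg fun i _ => ?_)
    have h1 := hBφ0 i
    have h2 := hDj0 (m-i)
    positivity
  refine ⟨C, ?_⟩
  rintro h ⟨h0, h1⟩ x
  have hR0 : (0:ℝ) < 2 * π * h := by positivity
  have hgcont : Continuous (f h) := (hf1 h ⟨h0, h1⟩).continuous
  have hgc : HasCompactSupport (f h) :=
    IsCompact.of_isClosed_subset hK (isClosed_tsupport _) (hfK h ⟨h0, h1⟩)
  have hgi : Integrable (f h) := hgcont.integrable_of_hasCompactSupport hgc
  have hFg : ∀ ξ, 𝓕 (f h) ξ = scFT n h (f h) ((2*π*h) • ξ) :=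
    fun ξ => scFT_eq_fourier n h h0 (f h) ξ
  have hFgc : Continuous (𝓕 (f h)) :=
    VectorFourier.fourierIntegral_continuous Real.continuous_fourierChar
      (by exact continuous_inner) hgi
  set W : EuclideanSpace ℝ (Fin n) → ℂ :=
    fun η => (1 - χ ((2*π*h) • η)) * 𝓕 (f h) η with hWdef
  set w : EuclideanSpace ℝ (Fin n) → ℂ :=
    fun η => (1 - χ (-((2*π*h) • η))) * 𝓕 (f h) (-η) with hwdef
  have hwW : ∀ η, w η = W (-η) := by
    intro η; simp only [hwdef, hWdef, smul_neg]
  have hWc : Continuous W :=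
    (continuous_const.sub (hχ.continuous.comp (continuous_const_smul _))).mul hFgc
  have hwc : Continuous w := by
    have : w = fun η => W (-η) := funext hwW
    rw [this]; exact hWc.comp continuous_neg
  have hWb : ∀ η, ‖W η‖ ≤ C₁ * h^M * ((1 + ‖(2*π*h) • η‖^2) ^ (-(M:ℝ)/2)) := by
    intro η
    by_cases hin : (2*π*h) • η ∈ Uχ
    · have hz : W η = 0 := by
        simp only [hWdef]; rw [hχUχ _ hin]; ring
      rw [hz, norm_zero]; positivity
    · have hb := hC₀ h ⟨h0, h1⟩ ((2*π*h) • η) hin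
      calc ‖W η‖ = ‖1 - χ ((2*π*h) • η)‖ * ‖𝓕 (f h) η‖ := norm_mul _ _
        _ ≤ (1 + Aχ) * (max C₀ 0 * h^M * ((1 + ‖(2*π*h) • η‖^2) ^ (-(M:ℝ)/2))) := by
            refine mul_le_mul ?_ ?_ (norm_nonneg _) (by positivity)
            · refine (norm_sub_le _ _).trans ?_
              rw [norm_one]
              exact add_le_add_right (hAχ _) 1
            · rw [hFg η]
              refine hb.trans ?_
              have hnn : (0:ℝ) ≤ h^M * ((1 + ‖(2*π*h) • η‖^2) ^ (-(M:ℝ)/2)) := by positivity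
              calc C₀ * h^M * ((1 + ‖(2*π*h) • η‖^2) ^ (-(M:ℝ)/2))
                  = C₀ * (h^M * ((1 + ‖(2*π*h) • η‖^2) ^ (-(M:ℝ)/2))) := by ring
                _ ≤ max C₀ 0 * (h^M * ((1 + ‖(2*π*h) • η‖^2) ^ (-(M:ℝ)/2))) :=
                    mul_le_mul_of_nonneg_right (le_max_left _ _) hnn
                _ = max C₀ 0 * h^M * ((1 + ‖(2*π*h) • η‖^2) ^ (-(M:ℝ)/2)) := by ring
        _ = C₁ * h^M * ((1 + ‖(2*π*h) • η‖^2) ^ (-(M:ℝ)/2)) := by rw [hC₁]; ring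
  have hwb : ∀ η, ‖w η‖ ≤ C₁ * h^M * ((1 + ‖(2*π*h) • η‖^2) ^ (-(M:ℝ)/2)) := by
    intro η
    rw [hwW η]
    have := hWb (-η)
    rwa [smul_neg, norm_neg] at this
  have hmajint : ∀ j, j ≤ m → Integrable (fun η => Φ j ((2*π*h) • η)) := fun j hj =>
    (MeasureTheory.integrable_comp_smul_iff volume (Φ j) hR0.ne').2 (hΦint j hj)
  have hmajeq : ∀ j, j ≤ m → ∫ η, Φ j ((2*π*h) • η) = (((2*π*h)^n)⁻¹) * Dj j := by
    intro j hj
    rw [MeasureTheory.Measure.integral_comp_smul_of_nonneg volume (Φ j) (2*π*h) (hR := hR0.le),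
      finrank_euclideanSpace_fin, smul_eq_mul]
  have hWint : Integrable W := by
    refine ((hmajint 0 (Nat.zero_le m)).const_mul (C₁ * h^M)).mono' hWc.aestronglyMeasurable ?_
    filter_upwards with η
    refine (hWb η).trans (le_of_eq ?_)
    simp [hΦ]
  have hV'c : Continuous (fun η => χ ((2*π*h) • η) * 𝓕 (f h) η) :=
    (hχ.continuous.comp (continuous_const_smul _)).mul hFgc
  have hV'cs : HasCompactSupport (fun η => χ ((2*π*h) • η) * 𝓕 (f h) η) := by
    have hS : IsCompact ((fun ξ : EuclideanSpace ℝ (Fin n) => (2*π*h)⁻¹ • ξ) '' tsupport χ) :=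
      hχc.image (continuous_const_smul _)
    refine HasCompactSupport.intro hS ?_
    intro η hη
    have hz : χ ((2*π*h) • η) = 0 := by
      by_contra hne
      refine hη ⟨(2*π*h) • η, subset_closure (Function.mem_support.2 hne), ?_⟩
      show (2*π*h)⁻¹ • ((2*π*h) • η) = η
      rw [smul_smul, inv_mul_cancel₀ hR0.ne', one_smul]
    rw [hz, zero_mul]
  have hV'int : Integrable (fun η => χ ((2*π*h) • η) * 𝓕 (f h) η) :=
    hV'c.integrable_of_hasCompactSupport hV'cs
  have hFgi : Integrable (𝓕 (f h)) := by
    have hdec : 𝓕 (f h) = fun η => (χ ((2*π*h) • η) * 𝓕 (f h) η) + W η := by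
      funext η; simp only [hWdef]; ring
    rw [hdec]; exact hV'int.add hWint
  -- moments of w
  have hwmom : ∀ j, j ≤ m → Integrable (fun η => ‖η‖^j * ‖w η‖) ∧
      (∫ η, ‖η‖^j * ‖w η‖) ≤ C₁ * Dj j * ((2*π)^(j+n))⁻¹ * h^N := by
    intro j hj
    have hpt : ∀ η, ‖η‖^j * ‖w η‖ ≤ (C₁ * h^M * (((2*π*h)^j)⁻¹)) * Φ j ((2*π*h) • η) := by
      intro η
      have hns : ‖(2*π*h) • η‖ = (2*π*h) * ‖η‖ := by
        rw [norm_smul, Real.norm_eq_abs, _root_.abs_of_pos hR0]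
      have h1' : ‖η‖^j = (((2*π*h)^j)⁻¹) * ‖(2*π*h) • η‖^j := by
        rw [hns, mul_pow]
        field_simp
        ring
      rw [h1']
      simp only [hΦ]
      calc (((2*π*h)^j)⁻¹) * ‖(2*π*h) • η‖^j * ‖w η‖
          ≤ (((2*π*h)^j)⁻¹) * ‖(2*π*h) • η‖^j *
              (C₁ * h^M * ((1 + ‖(2*π*h) • η‖^2) ^ (-(M:ℝ)/2))) := by
            exact mul_le_mul_of_nonneg_left (hwb η) (by positivity)
        _ = (C₁ * h^M * (((2*π*h)^j)⁻¹)) *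
              (‖(2*π*h) • η‖^j * ((1 + ‖(2*π*h) • η‖^2) ^ (-(M:ℝ)/2))) := by ring
    have hmaji : Integrable (fun η => (C₁ * h^M * (((2*π*h)^j)⁻¹)) * Φ j ((2*π*h) • η)) :=
      (hmajint j hj).const_mul _
    have hint : Integrable (fun η => ‖η‖^j * ‖w η‖) := by
      refine hmaji.mono' ?_ ?_
      · exact ((continuous_norm.pow j).mul hwc.norm).aestronglyMeasurable
      · filter_upwards with η
        rw [Real.norm_eq_abs, _root_.abs_of_nonneg (by positivity)]
        exact hpt η
    refine ⟨hint, ?_⟩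
    have step : (∫ η, ‖η‖^j * ‖w η‖) ≤ (C₁ * h^M * (((2*π*h)^j)⁻¹)) * ((((2*π*h)^n)⁻¹) * Dj j) := by
      refine le_trans (integral_mono_of_nonneg (Eventually.of_forall fun η => by positivity)
        hmaji (Eventually.of_forall hpt)) ?_
      rw [MeasureTheory.integral_const_mul, hmajeq j hj]
    refine step.trans ?_
    have h2' : ((2*π*h):ℝ)^j * (2*π*h)^n = ((2*π)^(j+n)) * h^(j+n) := by
      rw [← pow_add, mul_pow]
    have hM' : (h:ℝ)^M = h^(M-(j+n)) * h^(j+n) := by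
      rw [← pow_add]
      congr 1
      omega
    have hpow : (h:ℝ)^M * ((((2*π*h)^j)⁻¹) * (((2*π*h)^n)⁻¹)) = ((2*π)^(j+n))⁻¹ * h^(M-(j+n)) := by
      rw [← mul_inv, h2', hM', mul_inv]
      have hh : (h:ℝ)^(j+n) ≠ 0 := by positivity
      have hp : ((2*π:ℝ))^(j+n) ≠ 0 := by positivity
      field_simp
    calc C₁ * h^M * (((2*π*h)^j)⁻¹) * ((((2*π*h)^n)⁻¹) * Dj j)
        = C₁ * Dj j * (h^M * ((((2*π*h)^j)⁻¹) * (((2*π*h)^n)⁻¹))) := by ring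
      _ = C₁ * Dj j * (((2*π)^(j+n))⁻¹ * h^(M-(j+n))) := by rw [hpow]
      _ ≤ C₁ * Dj j * (((2*π)^(j+n))⁻¹ * h^N) := by
          refine mul_le_mul_of_nonneg_left ?_ (mul_nonneg hC₁0 (hDj0 j))
          refine mul_le_mul_of_nonneg_left ?_ (by positivity)
          exact pow_le_pow_of_le_one h0.le h1 (by omega)
      _ = C₁ * Dj j * ((2*π)^(j+n))⁻¹ * h^N := by ring
  have hφg : ∀ y, φ y * f h y = f h y := by
    intro y
    by_cases hy : y ∈ tsupport (f h)
    · rw [hφUφ y (hKUφ ((hfK h ⟨h0, h1⟩) hy)), one_mul]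
    · rw [image_eq_zero_of_notMem_tsupport hy, mul_zero]
  have hId := key_identity n h h0 (f h) hgcont hgi hFgi φ χ hφg hV'int
  have hfun : (fun y => f h y - quantize n h (fun p => φ p.1 * χ p.2) (f h) y)
      = fun y => φ y * 𝓕 w y := by
    funext y
    rw [hwdef]
    exact hId y
  rw [hfun]
  by_cases hx : x ∈ tsupport φ
  · -- main estimate
    have hmomI : ∀ (j : ℕ), (j : ℕ∞) ≤ (m : ℕ∞) → Integrable (fun η => ‖η‖^j * ‖w η‖) :=
      fun j hj => (hwmom j (by exact_mod_cast hj)).1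
    have hFwC : ContDiff ℝ ((m : ℕ∞) : WithTop ℕ∞) (𝓕 w) := Real.contDiff_fourier hmomI
    have hφm : ContDiff ℝ ((m : ℕ∞) : WithTop ℕ∞) φ := hφ.of_le (by exact_mod_cast le_top)
    have hmul := norm_iteratedFDeriv_mul_le (𝕜 := ℝ) hφm hFwC x
      (by exact_mod_cast le_refl (m : ℕ∞))
    have hFwb : ∀ j, j ≤ m → ‖iteratedFDeriv ℝ j (𝓕 w) x‖ ≤
        (2*π)^j * (C₁ * Dj j * ((2*π)^(j+n))⁻¹ * h^N) := by
      intro j hj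
      rw [Real.iteratedFDeriv_fourier (N := (m : ℕ∞)) hmomI
        hwc.aestronglyMeasurable (by exact_mod_cast hj)]
      refine le_trans (VectorFourier.norm_fourierIntegral_le_integral_norm _ _ _ _ _) ?_
      have hptw : ∀ η, ‖VectorFourier.fourierPowSMulRight (innerSL ℝ) w η j‖
          ≤ (2*π)^j * (‖η‖^j * ‖w η‖) := by
        intro η
        refine (VectorFourier.norm_fourierPowSMulRight_le _ _ _ _).trans ?_
        have hL : ‖innerSL ℝ (E := EuclideanSpace ℝ (Fin n))‖ ≤ 1 := norm_innerSL_le ℝ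
        have hLp : (2*π*‖innerSL ℝ (E := EuclideanSpace ℝ (Fin n))‖)^j ≤ (2*π)^j := by
          apply pow_le_pow_left₀ (by positivity)
          nlinarith
        calc (2*π*‖innerSL ℝ (E := EuclideanSpace ℝ (Fin n))‖)^j * ‖η‖^j * ‖w η‖
            ≤ (2*π)^j * ‖η‖^j * ‖w η‖ := by
              exact mul_le_mul_of_nonneg_right
                (mul_le_mul_of_nonneg_right hLp (by positivity)) (norm_nonneg _)
          _ = (2*π)^j * (‖η‖^j * ‖w η‖) := by ring
      calc (∫ η, ‖VectorFourier.fourierPowSMulRight (innerSL ℝ) w η j‖)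
          ≤ ∫ η, (2*π)^j * (‖η‖^j * ‖w η‖) :=
            integral_mono_of_nonneg (Eventually.of_forall fun η => norm_nonneg _)
              (((hwmom j hj).1).const_mul _) (Eventually.of_forall hptw)
        _ = (2*π)^j * ∫ η, ‖η‖^j * ‖w η‖ := MeasureTheory.integral_const_mul _ _
        _ ≤ (2*π)^j * (C₁ * Dj j * ((2*π)^(j+n))⁻¹ * h^N) :=
            mul_le_mul_of_nonneg_left (hwmom j hj).2 (by positivity)
    have hsum : ‖iteratedFDeriv ℝ m (fun y => φ y * 𝓕 w y) x‖ ≤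
        (∑ i ∈ Finset.range (m+1), (m.choose i : ℝ) * Bφ i *
          ((2*π)^(m-i) * (C₁ * Dj (m-i) * ((2*π)^((m-i)+n))⁻¹))) * h^N := by
      refine hmul.trans ?_
      rw [Finset.sum_mul]
      refine Finset.sum_le_sum ?_
      intro i hi
      have hterm := hFwb (m-i) (Nat.sub_le m i)
      calc (m.choose i : ℝ) * ‖iteratedFDeriv ℝ i φ x‖ * ‖iteratedFDeriv ℝ (m-i) (𝓕 w) x‖
          ≤ ((m.choose i : ℝ) * Bφ i) *
              ((2*π)^(m-i) * (C₁ * Dj (m-i) * ((2*π)^((m-i)+n))⁻¹ * h^N)) := by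
            refine mul_le_mul (mul_le_mul_of_nonneg_left (hBφ i x) (by positivity)) hterm
              (norm_nonneg _) ?_
            exact mul_nonneg (by positivity) (hBφ0 i)
        _ = (m.choose i : ℝ) * Bφ i *
              ((2*π)^(m-i) * (C₁ * Dj (m-i) * ((2*π)^((m-i)+n))⁻¹)) * h^N := by ring
    have hxk : ‖x‖^k ≤ Rx^k :=
      pow_le_pow_left₀ (norm_nonneg x) ((hRb x hx).trans (le_max_left _ _)) k
    calc ‖x‖^k * ‖iteratedFDeriv ℝ m (fun y => φ y * 𝓕 w y) x‖
        ≤ Rx^k * ((∑ i ∈ Finset.range (m+1), (m.choose i : ℝ) * Bφ i *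
            ((2*π)^(m-i) * (C₁ * Dj (m-i) * ((2*π)^((m-i)+n))⁻¹))) * h^N) := by
          refine mul_le_mul hxk hsum (norm_nonneg _) (by positivity)
      _ = C * h^N := by rw [hC]; ring
  · have hsub : Function.support (fun y => φ y * 𝓕 w y) ⊆ tsupport φ := fun y hy =>
      subset_closure (Function.mem_support.2 (left_ne_zero_of_mul (Function.mem_support.1 hy)))
    have hzero : iteratedFDeriv ℝ m (fun y => φ y * 𝓕 w y) x = 0 := by
      by_contra hne
      exact hx (closure_minimal hsub (isClosed_tsupport φ)
        (support_iteratedFDeriv_subset m (Function.mem_support.2 hne)))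
    rw [hzero, norm_zero, mul_zero]
    exact mul_nonneg hC0 (by positivity)
end

section
/- Fix x0, ξ0 ∈ ℝⁿ and let f_h(x) = e^{−|x−x0|²/(2h)} e^{i x·ξ0/h} be the coherent state. Then for every φ ∈ C_c^∞(ℝⁿ), (2πh)^{−n/2} F_h(φ f_h)(ξ0) → φ(x0) as h → 0⁺. In particular, if φ(x0) ≠ 0 then |F_h(φ f_h)(ξ0)| is not O(h^∞), and consequently (x0,ξ0) ∈ WF_h(f_h). -/
open MeasureTheory Real Complex Filter Set

/-- The coherent state `e^{-|x-x0|²/(2h)} e^{i x·ξ0/h}`. -/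
noncomputable def coherentState (n : ℕ) (x0 ξ0 : EuclideanSpace ℝ (Fin n)) (h : ℝ)
    (x : EuclideanSpace ℝ (Fin n)) : ℂ :=
  Complex.exp ((-(‖x - x0‖ ^ 2) / (2 * h) : ℝ)) *
    Complex.exp (Complex.I * (((inner ℝ x ξ0 : ℝ) / h : ℝ) : ℂ))

section Aux

variable {n : ℕ}

private lemma gauss_integrable :
    Integrable (fun z : EuclideanSpace ℝ (Fin n) => ((rexp (-(‖z‖ ^ 2) / 2) : ℝ) : ℂ)) := by
  have hC := GaussianFourier.integrable_cexp_neg_mul_sq_norm_add (V := EuclideanSpace ℝ (Fin n))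
    (b := (1/2 : ℂ)) (by norm_num) 0 0
  refine hC.congr ?_
  filter_upwards with v
  push_cast [Complex.ofReal_exp]
  ring_nf

private lemma gauss_integrable_real :
    Integrable (fun z : EuclideanSpace ℝ (Fin n) => rexp (-(‖z‖ ^ 2) / 2)) := by
  have := (gauss_integrable (n := n)).norm
  refine this.congr ?_
  filter_upwards with v
  rw [Complex.norm_real, Real.norm_eq_abs, _root_.abs_of_pos (Real.exp_pos _)]

private lemma gauss_integral :
    ∫ z : EuclideanSpace ℝ (Fin n), rexp (-(‖z‖ ^ 2) / 2) = (2 * π) ^ ((n : ℝ) / 2) := by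
  have h := GaussianFourier.integral_rexp_neg_mul_sq_norm
    (V := EuclideanSpace ℝ (Fin n)) (b := (1/2 : ℝ)) (by norm_num)
  rw [show (fun v : EuclideanSpace ℝ (Fin n) => rexp (-(1/2) * ‖v‖ ^ 2)) =
      fun v => rexp (-(‖v‖ ^ 2) / 2) from by funext v; ring_nf] at h
  rw [h, finrank_euclideanSpace_fin, show π / (1/2 : ℝ) = 2 * π from by ring]

private lemma step1 (x0 ξ0 : EuclideanSpace ℝ (Fin n)) (h : ℝ)
    (φ : EuclideanSpace ℝ (Fin n) → ℂ) :
    scFT n h (fun x => φ x * coherentState n x0 ξ0 h x) ξ0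
      = ∫ x : EuclideanSpace ℝ (Fin n), φ x * ((rexp (-(‖x - x0‖ ^ 2) / (2 * h)) : ℝ) : ℂ) := by
  unfold scFT coherentState
  congr 1
  funext x
  rw [Complex.ofReal_exp]
  set a : ℂ := (((inner ℝ x ξ0 : ℝ) / h : ℝ) : ℂ) with ha
  set Ec : ℂ := Complex.exp ((-(‖x - x0‖ ^ 2) / (2 * h) : ℝ)) with hEc
  have key : Complex.exp (-Complex.I * a) * Complex.exp (Complex.I * a) = 1 := by
    rw [← Complex.exp_add]
    ring_nf
    exact Complex.exp_zero
  linear_combination (φ x * Ec) * key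

private lemma step2 (x0 : EuclideanSpace ℝ (Fin n)) {h : ℝ} (hh : 0 < h)
    (φ : EuclideanSpace ℝ (Fin n) → ℂ) :
    ∫ x : EuclideanSpace ℝ (Fin n), φ x * ((rexp (-(‖x - x0‖ ^ 2) / (2 * h)) : ℝ) : ℂ)
      = (Real.sqrt h ^ n : ℝ) • ∫ z : EuclideanSpace ℝ (Fin n),
          φ (x0 + Real.sqrt h • z) * ((rexp (-(‖z‖ ^ 2) / 2) : ℝ) : ℂ) := by
  have hs : (0 : ℝ) < Real.sqrt h := Real.sqrt_pos.2 hh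
  set G : EuclideanSpace ℝ (Fin n) → ℂ :=
    fun y => φ (x0 + y) * ((rexp (-(‖y‖ ^ 2) / (2 * h)) : ℝ) : ℂ) with hG
  have h1 : ∫ x : EuclideanSpace ℝ (Fin n), φ x * ((rexp (-(‖x - x0‖ ^ 2) / (2 * h)) : ℝ) : ℂ)
      = ∫ y, G y := by
    rw [← integral_add_left_eq_self
      (fun x : EuclideanSpace ℝ (Fin n) => φ x * ((rexp (-(‖x - x0‖ ^ 2) / (2 * h)) : ℝ) : ℂ)) x0]
    simp [hG]
  have h2 : (fun z : EuclideanSpace ℝ (Fin n) =>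
      φ (x0 + Real.sqrt h • z) * ((rexp (-(‖z‖ ^ 2) / 2) : ℝ) : ℂ))
      = fun z => G (Real.sqrt h • z) := by
    funext z
    have hnorm : ‖Real.sqrt h • z‖ ^ 2 = h * ‖z‖ ^ 2 := by
      rw [norm_smul, Real.norm_eq_abs, _root_.abs_of_nonneg (Real.sqrt_nonneg h), mul_pow,
        Real.sq_sqrt hh.le]
    simp only [hG, hnorm]
    congr 3
    field_simp
  rw [h1, h2, Measure.integral_comp_smul_of_nonneg (volume) G (Real.sqrt h) (hR := (Real.sqrt_nonneg h)),
    finrank_euclideanSpace_fin, smul_smul, mul_inv_cancel₀ (pow_ne_zero _ hs.ne'), one_smul]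

private lemma step3 (x0 : EuclideanSpace ℝ (Fin n)) (φ : EuclideanSpace ℝ (Fin n) → ℂ)
    (hφc : Continuous φ) (hφs : HasCompactSupport φ) :
    Tendsto (fun h : ℝ => ∫ z : EuclideanSpace ℝ (Fin n),
        φ (x0 + Real.sqrt h • z) * ((rexp (-(‖z‖ ^ 2) / 2) : ℝ) : ℂ))
      (nhdsWithin 0 (Set.Ioi 0)) (nhds (φ x0 * (((2 * π) ^ ((n : ℝ) / 2) : ℝ) : ℂ))) := by
  obtain ⟨M, hM⟩ := hφs.exists_bound_of_continuous hφc
  have key := tendsto_integral_filter_of_dominated_convergence (μ := volume)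
    (l := nhdsWithin (0:ℝ) (Set.Ioi 0))
    (F := fun h z => φ (x0 + Real.sqrt h • z) * ((rexp (-(‖z‖ ^ 2) / 2) : ℝ) : ℂ))
    (f := fun z => φ x0 * ((rexp (-(‖z‖ ^ 2) / 2) : ℝ) : ℂ))
    (bound := fun z : EuclideanSpace ℝ (Fin n) => M * rexp (-(‖z‖ ^ 2) / 2))
    ?_ ?_ ?_ ?_
  · have hval : ∫ z : EuclideanSpace ℝ (Fin n), φ x0 * ((rexp (-(‖z‖ ^ 2) / 2) : ℝ) : ℂ)
        = φ x0 * (((2 * π) ^ ((n : ℝ) / 2) : ℝ) : ℂ) := by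
      rw [integral_const_mul,
        show ∫ a : EuclideanSpace ℝ (Fin n), ((rexp (-(‖a‖ ^ 2) / 2) : ℝ) : ℂ)
            = ((∫ a : EuclideanSpace ℝ (Fin n), rexp (-(‖a‖ ^ 2) / 2) : ℝ) : ℂ) from
          integral_ofReal, gauss_integral]
    rwa [hval] at key
  · filter_upwards with h
    have c1 : Continuous fun z : EuclideanSpace ℝ (Fin n) => x0 + Real.sqrt h • z :=
      continuous_const.add (continuous_const_smul (Real.sqrt h))
    have c2 : Continuous fun z : EuclideanSpace ℝ (Fin n) => rexp (-(‖z‖ ^ 2) / 2) :=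
      Real.continuous_exp.comp ((continuous_norm.pow 2).neg.div_const 2)
    exact ((hφc.comp c1).mul (Complex.continuous_ofReal.comp c2)).aestronglyMeasurable
  · filter_upwards with h
    filter_upwards with z
    rw [norm_mul, Complex.norm_real, Real.norm_eq_abs, abs_of_pos (Real.exp_pos _)]
    exact mul_le_mul_of_nonneg_right (hM _) (Real.exp_pos _).le
  · exact gauss_integrable_real.const_mul M
  · filter_upwards with z
    have t0 : Tendsto (fun h : ℝ => x0 + Real.sqrt h • z) (nhdsWithin 0 (Set.Ioi 0)) (nhds x0) := by
      have : Tendsto (fun h : ℝ => x0 + Real.sqrt h • z) (nhds 0) (nhds (x0 + Real.sqrt 0 • z)) := by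
        exact (tendsto_const_nhds.add ((Real.continuous_sqrt.tendsto 0).smul tendsto_const_nhds))
      simpa using this.mono_left nhdsWithin_le_nhds
    exact ((hφc.tendsto x0).comp t0).mul tendsto_const_nhds

private lemma coeff_eq {h : ℝ} (hh : 0 < h) :
    ((2 * π * h) ^ (-(n : ℝ) / 2) : ℝ) * Real.sqrt h ^ n = (2 * π) ^ (-(n : ℝ) / 2) := by
  have h2π : (0 : ℝ) < 2 * π := by positivity
  have hsq : (Real.sqrt h) ^ n = h ^ ((n : ℝ) / 2) := by
    rw [Real.sqrt_eq_rpow, ← Real.rpow_natCast (h ^ ((1:ℝ)/2)) n, ← Real.rpow_mul hh.le]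
    congr 1
    ring
  rw [Real.mul_rpow h2π.le hh.le, hsq, mul_assoc, ← Real.rpow_add hh,
    show -(n:ℝ) / 2 + (n:ℝ) / 2 = 0 from by ring, Real.rpow_zero, mul_one]

end Aux

/-- `(2πh)^{-n/2} F_h(φ f_h)(ξ0) → φ(x0)` as `h → 0⁺`; hence if
`φ(x0) ≠ 0` then `F_h(φ f_h)(ξ0)` is not `O(h^∞)`, and `(x0, ξ0) ∈ WF_h(f_h)`. -/
theorem coherentState_wavefront_mem (n : ℕ) (x0 ξ0 : EuclideanSpace ℝ (Fin n)) :
    (∀ φ : EuclideanSpace ℝ (Fin n) → ℂ, ContDiff ℝ (⊤ : ℕ∞) φ → HasCompactSupport φ →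
      (Filter.Tendsto
        (fun h : ℝ => (((2 * Real.pi * h) ^ (-(n : ℝ) / 2) : ℝ) : ℂ) *
          scFT n h (fun x => φ x * coherentState n x0 ξ0 h x) ξ0)
        (nhdsWithin 0 (Set.Ioi 0)) (nhds (φ x0))) ∧
      (φ x0 ≠ 0 → ¬ (∀ N : ℕ, ∃ C : ℝ, ∀ h ∈ Set.Ioc (0:ℝ) 1,
        ‖scFT n h (fun x => φ x * coherentState n x0 ξ0 h x) ξ0‖ ≤ C * h ^ N))) ∧
    ¬ (∃ φ : EuclideanSpace ℝ (Fin n) → ℂ, ContDiff ℝ (⊤ : ℕ∞) φ ∧ HasCompactSupport φ ∧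
        φ x0 ≠ 0 ∧ ∃ V : Set (EuclideanSpace ℝ (Fin n)), IsOpen V ∧ ξ0 ∈ V ∧
          ∀ N : ℕ, ∃ C : ℝ, ∀ h ∈ Set.Ioc (0:ℝ) 1, ∀ ξ ∈ V,
            ‖scFT n h (fun x => φ x * coherentState n x0 ξ0 h x) ξ‖ ≤ C * h ^ N) := by
  have main : ∀ φ : EuclideanSpace ℝ (Fin n) → ℂ, ContDiff ℝ (⊤ : ℕ∞) φ → HasCompactSupport φ →
      (Filter.Tendsto
        (fun h : ℝ => (((2 * Real.pi * h) ^ (-(n : ℝ) / 2) : ℝ) : ℂ) *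
          scFT n h (fun x => φ x * coherentState n x0 ξ0 h x) ξ0)
        (nhdsWithin 0 (Set.Ioi 0)) (nhds (φ x0))) ∧
      (φ x0 ≠ 0 → ¬ (∀ N : ℕ, ∃ C : ℝ, ∀ h ∈ Set.Ioc (0:ℝ) 1,
        ‖scFT n h (fun x => φ x * coherentState n x0 ξ0 h x) ξ0‖ ≤ C * h ^ N)) := by
    intro φ hφd hφs
    have hφc : Continuous φ := hφd.continuous
    have h2π : (0 : ℝ) < 2 * π := by positivity
    -- Part 1: the limit
    have part1 : Filter.Tendsto
        (fun h : ℝ => (((2 * Real.pi * h) ^ (-(n : ℝ) / 2) : ℝ) : ℂ) *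
          scFT n h (fun x => φ x * coherentState n x0 ξ0 h x) ξ0)
        (nhdsWithin 0 (Set.Ioi 0)) (nhds (φ x0)) := by
      have heq : (fun h : ℝ => (((2 * π) ^ (-(n : ℝ) / 2) : ℝ) : ℂ) *
            ∫ z : EuclideanSpace ℝ (Fin n),
              φ (x0 + Real.sqrt h • z) * ((rexp (-(‖z‖ ^ 2) / 2) : ℝ) : ℂ))
          =ᶠ[nhdsWithin (0:ℝ) (Set.Ioi 0)]
          (fun h : ℝ => (((2 * Real.pi * h) ^ (-(n : ℝ) / 2) : ℝ) : ℂ) *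
            scFT n h (fun x => φ x * coherentState n x0 ξ0 h x) ξ0) := by
        filter_upwards [self_mem_nhdsWithin] with h hh
        have hh' : (0 : ℝ) < h := hh
        rw [step1 x0 ξ0 h φ, step2 x0 hh' φ, real_smul, ← mul_assoc, ← Complex.ofReal_mul,
          coeff_eq hh']
      have lim0 := (tendsto_const_nhds (x := (((2 * π) ^ (-(n : ℝ) / 2) : ℝ) : ℂ))
        (f := nhdsWithin (0:ℝ) (Set.Ioi 0))).mul (step3 x0 φ hφc hφs)
      have hval : (((2 * π) ^ (-(n : ℝ) / 2) : ℝ) : ℂ) *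
          (φ x0 * (((2 * π) ^ ((n : ℝ) / 2) : ℝ) : ℂ)) = φ x0 := by
        rw [mul_comm (φ x0), ← mul_assoc, ← Complex.ofReal_mul, ← Real.rpow_add h2π,
          show -(n:ℝ) / 2 + (n:ℝ) / 2 = 0 from by ring, Real.rpow_zero]
        simp
      rw [hval] at lim0
      exact lim0.congr' heq
    refine ⟨part1, ?_⟩
    -- Part 2: not O(h^∞)
    intro hφ0 hbad
    obtain ⟨C, hC⟩ := hbad (n + 1)
    set S : ℝ → ℂ := fun h => scFT n h (fun x => φ x * coherentState n x0 ξ0 h x) ξ0 with hS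
    have t1 : Tendsto (fun h : ℝ => ‖(((2 * Real.pi * h) ^ (-(n : ℝ) / 2) : ℝ) : ℂ) * S h‖)
        (nhdsWithin 0 (Set.Ioi 0)) (nhds ‖φ x0‖) := part1.norm
    have t2 : Tendsto (fun h : ℝ => ((2 * π) ^ (-(n : ℝ) / 2) * C) * h ^ ((n + 1 : ℝ) - (n : ℝ) / 2))
        (nhdsWithin 0 (Set.Ioi 0)) (nhds 0) := by
      have hp : (0 : ℝ) < (n + 1 : ℝ) - (n : ℝ) / 2 := by
        have : (n : ℝ) / 2 ≤ (n : ℝ) := by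
          have := Nat.cast_nonneg (α := ℝ) n; linarith
        linarith
      have hrp : Tendsto (fun h : ℝ => h ^ ((n + 1 : ℝ) - (n : ℝ) / 2)) (nhds 0)
          (nhds ((0:ℝ) ^ ((n + 1 : ℝ) - (n : ℝ) / 2))) :=
        (Real.continuousAt_rpow_const 0 _ (Or.inr hp.le)).tendsto
      rw [Real.zero_rpow hp.ne'] at hrp
      simpa using tendsto_const_nhds.mul (hrp.mono_left nhdsWithin_le_nhds)
    have squeeze : ∀ᶠ h in nhdsWithin (0:ℝ) (Set.Ioi 0),
        ‖(((2 * Real.pi * h) ^ (-(n : ℝ) / 2) : ℝ) : ℂ) * S h‖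
          ≤ ((2 * π) ^ (-(n : ℝ) / 2) * C) * h ^ ((n + 1 : ℝ) - (n : ℝ) / 2) := by
      have hmem : Set.Ioo (0:ℝ) 1 ∈ nhdsWithin (0:ℝ) (Set.Ioi 0) :=
        Ioo_mem_nhdsGT_of_mem (by simp)
      filter_upwards [hmem] with h hh
      have hh0 : (0 : ℝ) < h := hh.1
      have hcoef : (0 : ℝ) ≤ (2 * π * h) ^ (-(n : ℝ) / 2) := Real.rpow_nonneg (by positivity) _
      have hb := hC h ⟨hh0, hh.2.le⟩
      calc ‖(((2 * Real.pi * h) ^ (-(n : ℝ) / 2) : ℝ) : ℂ) * S h‖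
          = (2 * π * h) ^ (-(n : ℝ) / 2) * ‖S h‖ := by
            rw [norm_mul, Complex.norm_real, Real.norm_eq_abs, _root_.abs_of_nonneg hcoef]
        _ ≤ (2 * π * h) ^ (-(n : ℝ) / 2) * (C * h ^ (n + 1)) :=
            mul_le_mul_of_nonneg_left hb hcoef
        _ = ((2 * π) ^ (-(n : ℝ) / 2) * C) * h ^ ((n + 1 : ℝ) - (n : ℝ) / 2) := by
            have e0 : h ^ (n + 1) = h ^ (((n : ℝ) + 1)) := by
              rw [show ((n : ℝ) + 1) = ((n + 1 : ℕ) : ℝ) from by push_cast; ring,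
                Real.rpow_natCast]
            have e1 : h ^ ((n : ℝ) + 1 - (n : ℝ) / 2)
                = h ^ (-(n : ℝ) / 2) * h ^ (((n : ℝ) + 1)) := by
              rw [← Real.rpow_add hh0]
              congr 1
              ring
            rw [Real.mul_rpow h2π.le hh0.le, e0, e1]
            ring
    have hle : ‖φ x0‖ ≤ 0 := le_of_tendsto_of_tendsto t1 t2 squeeze
    exact hφ0 (norm_le_zero_iff.1 hle)
  refine ⟨main, ?_⟩
  rintro ⟨φ, hφd, hφs, hφ0, V, hVo, hξV, hb⟩
  refine (main φ hφd hφs).2 hφ0 ?_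
  intro N
  obtain ⟨C, hC⟩ := hb N
  exact ⟨C, fun h hh => hC h hh ξ0 hξV⟩
end
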